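/- arXiv:1204.5780 — 6 statements merged into one kernel-verified Lean document; each statement's English description precedes it below -/
import Mathlib

section
/- Let G=(V,E) be a finite graph with edge rewards r:E→ℝ≥0 and friendship parameters 1≥α₁≥α₂≥…≥0. If a matching M is stable in the correlated stable matching game without friendship (α⃗=0), then M is also stable in the game with friendship utilities given by α⃗. -/
open Finset

variable {V : Type*} [Fintype V] [DecidableEq V]

/-- `partnerReward r M x` is the reward share that node `x` obtains in matching `M`:
`r x y` if `x` is matched to `y`, and `0` if `x` is unmatched. -/
def partnerReward (r : V → V → ℝ) (M : V → Option V) (x : V) : ℝ :=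
  match M x with
  | some y => r x y
  | none => 0

/-- `M : V → Option V` encodes a matching in graph `G`. -/
def IsMatching (G : SimpleGraph V) (M : V → Option V) : Prop :=
  (∀ u v, M u = some v → G.Adj u v) ∧ (∀ u v, M u = some v → M v = some u)

/-- The matching obtained when `u` and `v` abandon their current partners (if any)
and match to each other. -/
def rematch (M : V → Option V) (u v : V) : V → Option V :=
  fun x => if x = u then some v else if x = v then some u
    else if M x = some u ∨ M x = some v then none else M x

/-- The perceived (friendship) utility of node `v`:
`U_v = R_v + ∑_d α_d ∑_{u ∈ N_d(v)} R_u`, where the sum over nodes at distance `d`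
is encoded via `α (G.dist v u)` (with `α 0 = 0` for unreachable/irrelevant pairs). -/
noncomputable def util (G : SimpleGraph V) (r : V → V → ℝ) (α : ℕ → ℝ)
    (M : V → Option V) (v : V) : ℝ :=
  partnerReward r M v +
    ∑ u ∈ univ.filter (fun u => u ≠ v), α (G.dist v u) * partnerReward r M u

/-- `(u,v)` is a blocking pair for `M`: they are adjacent, not matched to each other,
and both strictly increase their perceived utility by matching to each other. -/
def IsBlockingPair (G : SimpleGraph V) (r : V → V → ℝ) (α : ℕ → ℝ)
    (M : V → Option V) (u v : V) : Prop :=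
  G.Adj u v ∧ M u ≠ some v ∧
    util G r α M u < util G r α (rematch M u v) u ∧
    util G r α M v < util G r α (rematch M u v) v

/-- A stable matching: a matching admitting no blocking pair. -/
def StableMatching (G : SimpleGraph V) (r : V → V → ℝ) (α : ℕ → ℝ)
    (M : V → Option V) : Prop :=
  IsMatching G M ∧ ∀ u v, ¬ IsBlockingPair G r α M u v

/-- Total weight of a matching under equal sharing (each edge counted once). -/
noncomputable def matchWeight (r : V → V → ℝ) (M : V → Option V) : ℝ :=
  (∑ v, partnerReward r M v) / 2

/-- Total reward of a matching under general reward sharing (sum of all shares). -/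
noncomputable def totalWeight (r : V → V → ℝ) (M : V → Option V) : ℝ :=
  ∑ v, partnerReward r M v

/-- Admissible friendship parameters: `1 ≥ α₁ ≥ α₂ ≥ … ≥ 0` (and `α 0 = 0` as a
convention so that only distances `d ≥ 1` contribute). -/
def FriendshipVec (α : ℕ → ℝ) : Prop :=
  α 0 = 0 ∧ α 1 ≤ 1 ∧ (∀ d, 0 ≤ α d) ∧ ∀ d e, 1 ≤ d → d ≤ e → α e ≤ α d


section Auxiliary

lemma partnerReward_nonneg (r : V → V → ℝ) (hr : ∀ u v, 0 ≤ r u v)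
    (M : V → Option V) (x : V) : 0 ≤ partnerReward r M x := by
  unfold partnerReward
  cases hMx : M x
  · simp
  · simpa using hr _ _

lemma partnerReward_of_eq (r : V → V → ℝ) {M : V → Option V} {x y : V}
    (h : M x = some y) : partnerReward r M x = r x y := by
  unfold partnerReward; rw [h]

lemma partnerReward_of_none (r : V → V → ℝ) {M : V → Option V} {x : V}
    (h : M x = none) : partnerReward r M x = 0 := by
  unfold partnerReward; rw [h]

lemma rematch_fst (M : V → Option V) (u v : V) : rematch M u v u = some v := by
  simp [rematch]

lemma rematch_snd (M : V → Option V) (u v : V) (h : v ≠ u) :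
    rematch M u v v = some u := by
  simp [rematch, h]

lemma rematch_comm (M : V → Option V) {u v : V} (h : u ≠ v) :
    rematch M u v = rematch M v u := by
  funext x
  unfold rematch
  by_cases hxu : x = u <;> by_cases hxv : x = v <;>
    simp_all [or_comm]

lemma partnerReward_rematch_le (r : V → V → ℝ) (hr : ∀ u v, 0 ≤ r u v)
    (M : V → Option V) {u v x : V} (hxu : x ≠ u) (hxv : x ≠ v) :
    partnerReward r (rematch M u v) x ≤ partnerReward r M x := by
  have hrw : rematch M u v x = if M x = some u ∨ M x = some v then none else M x := by
    simp [rematch, hxu, hxv]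
  unfold partnerReward
  rw [hrw]
  by_cases h : M x = some u ∨ M x = some v
  · rw [if_pos h]
    exact partnerReward_nonneg r hr M x
  · rw [if_neg h]

lemma no_gain (G : SimpleGraph V) (r : V → V → ℝ) (α : ℕ → ℝ)
    (hr_symm : ∀ u v, r u v = r v u) (hr_nonneg : ∀ u v, 0 ≤ r u v)
    (hα : FriendshipVec α) (M : V → Option V) (hM : IsMatching G M)
    (u v : V) (hadj : G.Adj u v) (hne : M u ≠ some v)
    (hle : r u v ≤ partnerReward r M u) :
    util G r α (rematch M u v) u ≤ util G r α M u := by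
  obtain ⟨h0, h1, hpos, hmono⟩ := hα
  have hvu : v ≠ u := hadj.ne'
  have hduv : G.dist u v = 1 := SimpleGraph.dist_eq_one_iff_adj.mpr hadj
  have hb : 0 ≤ partnerReward r M v := partnerReward_nonneg r hr_nonneg M v
  have hα1 : 0 ≤ α 1 := hpos 1
  have hprv' : partnerReward r (rematch M u v) v = r u v := by
    rw [partnerReward_of_eq r (rematch_snd M u v hvu), hr_symm]
  have hpru' : partnerReward r (rematch M u v) u = r u v :=
    partnerReward_of_eq r (rematch_fst M u v)
  unfold util
  rw [hpru']
  cases hMu : M u with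
  | none =>
    have ha : partnerReward r M u = 0 := partnerReward_of_none r hMu
    rw [ha] at hle
    have hw : r u v = 0 := le_antisymm hle (hr_nonneg u v)
    rw [hw, ha]
    have hsum : ∀ x ∈ univ.filter (fun x => x ≠ u),
        α (G.dist u x) * partnerReward r (rematch M u v) x ≤
        α (G.dist u x) * partnerReward r M x := by
      intro x hx
      simp only [mem_filter] at hx
      apply mul_le_mul_of_nonneg_left _ (hpos _)
      by_cases hxv : x = v
      · subst hxv
        rw [hprv', hw]
        exact hb
      · exact partnerReward_rematch_le r hr_nonneg M hx.2 hxv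
    simpa using Finset.sum_le_sum hsum
  | some p =>
    have hMp : M p = some u := hM.2 u p hMu
    have hadjup : G.Adj u p := hM.1 u p hMu
    have hpu : p ≠ u := hadjup.ne'
    have hpv : p ≠ v := by
      rintro rfl; exact hne hMu
    have hdup : G.dist u p = 1 := SimpleGraph.dist_eq_one_iff_adj.mpr hadjup
    have ha : partnerReward r M u = r u p := partnerReward_of_eq r hMu
    have hap : partnerReward r M p = partnerReward r M u := by
      rw [partnerReward_of_eq r hMp, ha, hr_symm]
    have hprp' : partnerReward r (rematch M u v) p = 0 := by
      apply partnerReward_of_none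
      simp [rematch, hpu, hpv, hMp]
    set A := univ.filter (fun x => x ≠ u) with hA
    have hvA : v ∈ A := by simp [hA, hvu]
    have hpA : p ∈ A := by simp [hA, hpu]
    have key : ∑ x ∈ A, α (G.dist u x) * partnerReward r (rematch M u v) x ≤
        ∑ x ∈ A, (α (G.dist u x) * partnerReward r M x +
          ((if x = v then α 1 * (r u v - partnerReward r M v) else 0) +
           (if x = p then -(α 1 * partnerReward r M u) else 0))) := by
      apply Finset.sum_le_sum
      intro x hx
      simp only [hA, mem_filter] at hx
      by_cases hxv : x = v
      · subst hxv
        rw [hprv', if_pos rfl, if_neg hpv.symm, hduv]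
        ring_nf
        exact le_refl _
      · by_cases hxp : x = p
        · subst hxp
          rw [hprp', if_neg hxv, if_pos rfl, hdup, hap]
          simp
        · rw [if_neg hxv, if_neg hxp]
          have := partnerReward_rematch_le r hr_nonneg M (u := u) (v := v) hx.2 hxv
          nlinarith [hpos (G.dist u x)]
    rw [Finset.sum_add_distrib, Finset.sum_add_distrib,
        Finset.sum_ite_eq' A v (fun _ => α 1 * (r u v - partnerReward r M v)),
        Finset.sum_ite_eq' A p (fun _ => -(α 1 * partnerReward r M u)),
        if_pos hvA, if_pos hpA] at key
    have hmul : α 1 * r u v ≤ α 1 * partnerReward r M u :=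
      mul_le_mul_of_nonneg_left hle hα1
    have hbb : 0 ≤ α 1 * partnerReward r M v := mul_nonneg hα1 hb
    linarith [key]

end Auxiliary

/-- a matching stable without friendship (α⃗ = 0) is also stable
with friendship utilities given by any admissible α⃗. -/
theorem stable_without_friendship_is_stable_with_friendship
    (G : SimpleGraph V) (r : V → V → ℝ) (α : ℕ → ℝ)
    (hr_symm : ∀ u v, r u v = r v u) (hr_nonneg : ∀ u v, 0 ≤ r u v)
    (hα : FriendshipVec α)
    (M : V → Option V)
    (hstable : StableMatching G r (fun _ => 0) M) :
    StableMatching G r α M := by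
  obtain ⟨hM, hstab⟩ := hstable
  refine ⟨hM, fun u v hbp => ?_⟩
  obtain ⟨hadj, hne, hu, hv⟩ := hbp
  have hvu : M v ≠ some u := fun h => hne (hM.2 v u h)
  have hz : ∀ (N : V → Option V) (x : V),
      util G r (fun _ => 0) N x = partnerReward r N x := by
    intro N x; unfold util; simp
  have hcases : r u v ≤ partnerReward r M u ∨ r u v ≤ partnerReward r M v := by
    by_contra hc
    push_neg at hc
    refine hstab u v ⟨hadj, hne, ?_, ?_⟩
    · rw [hz, hz, partnerReward_of_eq r (rematch_fst M u v)]
      exact hc.1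
    · rw [hz, hz, partnerReward_of_eq r (rematch_snd M u v hadj.ne'), ← hr_symm]
      exact hc.2
  rcases hcases with h | h
  · exact absurd hu (not_lt.mpr (no_gain G r α hr_symm hr_nonneg hα M hM u v hadj hne h))
  · rw [rematch_comm M hadj.ne] at hv
    have := no_gain G r α hr_symm hr_nonneg hα M hM v u hadj.symm hvu (by rw [hr_symm]; exact h)
    exact absurd hv (not_lt.mpr this)
end

section
/- The price of anarchy of correlated stable matching with friendship utilities is at most 2: for any stable matching M and maximum-weight matching M*, the total weight of M* is at most twice the total weight of M. -/
open Finset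

variable {V : Type*} [Fintype V] [DecidableEq V]

lemma key_ineq (G : SimpleGraph V) (r : V → V → ℝ) (α : ℕ → ℝ)
    (hr_symm : ∀ u v, r u v = r v u) (hr_nonneg : ∀ u v, 0 ≤ r u v)
    (hα : FriendshipVec α) (M : V → Option V) (hM : IsMatching G M)
    {u v : V} (hadj : G.Adj u v) (hne : M u ≠ some v)
    (hni : util G r α (rematch M u v) u ≤ util G r α M u) :
    r u v ≤ partnerReward r M u + partnerReward r M v := by
  obtain ⟨hα0, hα1, hαnn, hαmono⟩ := hα
  have hαle : ∀ d, α d ≤ α 1 := by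
    intro d
    rcases Nat.eq_zero_or_pos d with h | h
    · rw [h, hα0]; exact hαnn 1
    · exact hαmono 1 d le_rfl h
  have huv : u ≠ v := hadj.ne
  have hP := partnerReward_nonneg r hr_nonneg M
  have hdist : G.dist u v = 1 := SimpleGraph.dist_eq_one_iff_adj.mpr hadj
  have hP'u : partnerReward r (rematch M u v) u = r u v := by
    simp [partnerReward, rematch]
  have hP'v : partnerReward r (rematch M u v) v = r v u := by
    simp [partnerReward, rematch, huv.symm]
  set s : Finset V := univ.filter (fun x => x ≠ u) with hs
  have hvs : v ∈ s := by simp [hs, huv.symm]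
  have hsplit : ∀ N : V → Option V,
      ∑ x ∈ s, α (G.dist u x) * partnerReward r N x
      = α 1 * partnerReward r N v
        + ∑ x ∈ s.erase v, α (G.dist u x) * partnerReward r N x := by
    intro N
    rw [← Finset.add_sum_erase s _ hvs, hdist]
  rw [util, util, hsplit, hsplit, hP'u, hP'v, hr_symm v u] at hni
  -- bound the tail sum difference
  have hterm : ∀ x ∈ s.erase v,
      α (G.dist u x) * partnerReward r M x
        - α (G.dist u x) * partnerReward r (rematch M u v) x
      ≤ α 1 * ((if M x = some u then partnerReward r M x else 0)
          + (if M x = some v then partnerReward r M x else 0)) := by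
    intro x hx
    have hxv : x ≠ v := (Finset.mem_erase.mp hx).1
    have hxu : x ≠ u := by
      have := (Finset.mem_erase.mp hx).2
      simpa [hs] using this
    by_cases h1 : M x = some u
    · have h2 : ¬ M x = some v := by simp [h1, huv]
      have hP' : partnerReward r (rematch M u v) x = 0 := by
        simp [partnerReward, rematch, hxu, hxv, h1]
      rw [hP', if_pos h1, if_neg h2]
      have := mul_le_mul_of_nonneg_right (hαle (G.dist u x)) (hP x)
      linarith
    · by_cases h2 : M x = some v
      · have hP' : partnerReward r (rematch M u v) x = 0 := by
          simp [partnerReward, rematch, hxu, hxv, h2]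
        rw [hP', if_pos h2, if_neg h1]
        have := mul_le_mul_of_nonneg_right (hαle (G.dist u x)) (hP x)
        linarith
      · have hP' : partnerReward r (rematch M u v) x = partnerReward r M x := by
          simp [partnerReward, rematch, hxu, hxv, h1, h2]
        rw [hP', if_neg h1, if_neg h2]
        simp
  have hite1 : ∑ x ∈ s.erase v, (if M x = some u then partnerReward r M x else 0)
      = partnerReward r M u := by
    rcases h : M u with _ | w
    · rw [Finset.sum_eq_zero, partnerReward, h]
      intro x _
      rw [if_neg]
      intro hc
      have := hM.2 x u hc
      rw [h] at this
      exact Option.some_ne_none x this.symm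
    · have hwu : M w = some u := hM.2 u w h
      have hw_ne_u : w ≠ u := by
        intro hwu'
        apply G.loopless.irrefl u
        have hadj' := hM.1 u w h
        rwa [hwu'] at hadj'
      have hw_ne_v : w ≠ v := by rintro rfl; exact hne h
      have hw_mem : w ∈ s.erase v := by simp [hs, hw_ne_v, hw_ne_u]
      rw [Finset.sum_eq_single_of_mem w hw_mem]
      · rw [if_pos hwu]
        show partnerReward r M w = partnerReward r M u
        rw [partnerReward, partnerReward, hwu, h]
        exact hr_symm w u
      · intro x _ hxw
        rw [if_neg]
        intro hc
        have := hM.2 x u hc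
        rw [h] at this
        exact hxw (Option.some_inj.mp this).symm
  have hite2 : ∑ x ∈ s.erase v, (if M x = some v then partnerReward r M x else 0)
      = partnerReward r M v := by
    rcases h : M v with _ | z
    · rw [Finset.sum_eq_zero, partnerReward, h]
      intro x _
      rw [if_neg]
      intro hc
      have := hM.2 x v hc
      rw [h] at this
      exact Option.some_ne_none x this.symm
    · have hzv : M z = some v := hM.2 v z h
      have hz_ne_v : z ≠ v := by
        intro hzv'
        apply G.loopless.irrefl v
        have hadj' := hM.1 v z h
        rwa [hzv'] at hadj'
      have hz_ne_u : z ≠ u := by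
        intro hzu'
        apply hne
        apply hM.2 v u
        rwa [hzu'] at h
      have hz_mem : z ∈ s.erase v := by simp [hs, hz_ne_v, hz_ne_u]
      rw [Finset.sum_eq_single_of_mem z hz_mem]
      · rw [if_pos hzv]
        show partnerReward r M z = partnerReward r M v
        rw [partnerReward, partnerReward, hzv, h]
        exact hr_symm z v
      · intro x _ hxz
        rw [if_neg]
        intro hc
        have := hM.2 x v hc
        rw [h] at this
        exact hxz (Option.some_inj.mp this).symm
  have hsum := Finset.sum_le_sum hterm
  rw [Finset.sum_sub_distrib] at hsum
  have hrhs : ∑ x ∈ s.erase v, α 1 * ((if M x = some u then partnerReward r M x else 0)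
      + (if M x = some v then partnerReward r M x else 0))
      = α 1 * partnerReward r M u + α 1 * partnerReward r M v := by
    rw [← Finset.mul_sum, Finset.sum_add_distrib, hite1, hite2, mul_add]
  rw [hrhs] at hsum
  -- combine
  have hruv := hr_nonneg u v
  nlinarith [hP u, hP v, hαnn 1, hα1]

lemma key_edge (G : SimpleGraph V) (r : V → V → ℝ) (α : ℕ → ℝ)
    (hr_symm : ∀ u v, r u v = r v u) (hr_nonneg : ∀ u v, 0 ≤ r u v)
    (hα : FriendshipVec α) (M : V → Option V) (hM : StableMatching G r α M)
    {x y : V} (hadj : G.Adj x y) :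
    r x y ≤ partnerReward r M x + partnerReward r M y := by
  obtain ⟨hMm, hMs⟩ := hM
  have hP := partnerReward_nonneg r hr_nonneg M
  by_cases hMx : M x = some y
  · have hx : partnerReward r M x = r x y := by rw [partnerReward, hMx]
    linarith [hP y]
  · have hnb := hMs x y
    rw [IsBlockingPair] at hnb
    push_neg at hnb
    have hxyne : x ≠ y := hadj.ne
    by_cases hCx : util G r α M x < util G r α (rematch M x y) x
    · have hD := hnb hadj hMx hCx
      have hMy : M y ≠ some x := fun h => hMx (hMm.2 y x h)
      have hr : util G r α (rematch M y x) y ≤ util G r α M y := by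
        rw [← rematch_comm M hxyne]
        exact hD
      have := key_ineq G r α hr_symm hr_nonneg hα M hMm hadj.symm hMy hr
      rw [hr_symm x y]
      linarith
    · exact key_ineq G r α hr_symm hr_nonneg hα M hMm hadj hMx (not_lt.mp hCx)

/-- price of anarchy at most 2: any matching (in particular the
maximum-weight matching) has at most twice the weight of any stable matching. -/
theorem poa_friendship_equal_sharing_le_two
    (G : SimpleGraph V) (r : V → V → ℝ) (α : ℕ → ℝ)
    (hr_symm : ∀ u v, r u v = r v u) (hr_nonneg : ∀ u v, 0 ≤ r u v)
    (hα : FriendshipVec α)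
    (M Mstar : V → Option V)
    (hM : StableMatching G r α M) (hMstar : IsMatching G Mstar) :
    matchWeight r Mstar ≤ 2 * matchWeight r M := by
  obtain ⟨hMm, hMs⟩ := hM
  have hP := partnerReward_nonneg r hr_nonneg M
  have h1 : ∑ x, partnerReward r Mstar x
      ≤ ∑ x, (partnerReward r M x
        + ∑ y, (if Mstar x = some y then partnerReward r M y else 0)) := by
    apply Finset.sum_le_sum
    intro x _
    rcases h : Mstar x with _ | y
    · have hx : partnerReward r Mstar x = 0 := by rw [partnerReward, h]
      rw [hx]
      simpa using hP x
    · have hx : partnerReward r Mstar x = r x y := by rw [partnerReward, h]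
      have hsum : ∑ y', (if some y = some y' then partnerReward r M y' else 0)
          = partnerReward r M y := by
        rw [Finset.sum_eq_single_of_mem y (Finset.mem_univ y)]
        · rw [if_pos rfl]
        · intro b _ hb
          rw [if_neg]
          simp [hb.symm]
      rw [hx, hsum]
      exact key_edge G r α hr_symm hr_nonneg hα M ⟨hMm, hMs⟩ (hMstar.1 x y h)
  have h2 : ∑ x, ∑ y, (if Mstar x = some y then partnerReward r M y else 0)
      ≤ ∑ y, partnerReward r M y := by
    rw [Finset.sum_comm]
    apply Finset.sum_le_sum
    intro y _
    rcases h : Mstar y with _ | x0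
    · rw [Finset.sum_eq_zero]
      · exact hP y
      · intro x _
        rw [if_neg]
        intro hc
        have := hMstar.2 x y hc
        rw [h] at this
        exact Option.some_ne_none x this.symm
    · rw [Finset.sum_eq_single_of_mem x0 (Finset.mem_univ x0)]
      · rw [if_pos (hMstar.2 y x0 h)]
      · intro x _ hx
        rw [if_neg]
        intro hc
        have := hMstar.2 x y hc
        rw [h] at this
        exact hx (Option.some_inj.mp this).symm
  rw [Finset.sum_add_distrib] at h1
  rw [matchWeight, matchWeight]
  linarith
end

section
/- For R ≥ 1 and α₁ ∈ [0,1], define Q = (R+α₁)/(1+α₁R) and Q' = (1+α₁)(1+R)/(1+α₁(R+1)). Then 0 < Q' − Q ≤ 1. -/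
/-- for R ≥ 1 and α₁ ∈ [0,1], with Q = (R+α₁)/(1+α₁R) and
Q' = (1+α₁)(1+R)/(1+α₁(R+1)), we have 0 < Q' − Q ≤ 1. -/
theorem pos_lower_bound_gap (α1 R : ℝ)
    (hα0 : 0 ≤ α1) (hα1 : α1 ≤ 1) (hR : 1 ≤ R) :
    0 < (1 + α1) * (1 + R) / (1 + α1 * (R + 1)) - (R + α1) / (1 + α1 * R) ∧
    (1 + α1) * (1 + R) / (1 + α1 * (R + 1)) - (R + α1) / (1 + α1 * R) ≤ 1 := by
  have hd1 : 0 < 1 + α1 * (R + 1) := by nlinarith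
  have hd2 : 0 < 1 + α1 * R := by nlinarith
  rw [div_sub_div _ _ (ne_of_gt hd1) (ne_of_gt hd2)]
  constructor
  · apply div_pos
    · nlinarith [mul_nonneg hα0 hα0, sq_nonneg (α1*R)]
    · positivity
  · rw [div_le_one (by positivity)]
    nlinarith [mul_nonneg hα0 hα0, mul_nonneg (mul_nonneg hα0 hα0) (sub_nonneg.mpr hR)]
end

section
/- In a stable matching game with general reward sharing and friendship utilities, any stable matching of the auxiliary ordinal stable roommates instance SRP_q (where node u prefers v to w iff q^u_{uv} > q^u_{uw}) is a stable matching of the game with friendship utilities. Hence existence of a stable matching in SRP_q implies existence in the friendship game. -/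
open Finset

variable {V : Type*} [Fintype V] [DecidableEq V]

/-- Skewed reward share `q^x_{xy} = r^x_{xy} + α₁ r^y_{xy}`. -/
def qShare (r : V → V → ℝ) (α1 : ℝ) (x y : V) : ℝ := r x y + α1 * r y x

/-- Blocking pair of the ordinal stable roommates instance SRP_q, where node u
prefers v over w iff `q^u_{uv} > q^u_{uw}`, and any partner over being unmatched. -/
def SRPqBlocking (G : SimpleGraph V) (r : V → V → ℝ) (α1 : ℝ)
    (M : V → Option V) (u v : V) : Prop :=
  G.Adj u v ∧ M u ≠ some v ∧
    (∀ w, M u = some w → qShare r α1 u w < qShare r α1 u v) ∧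
    (∀ w, M v = some w → qShare r α1 v w < qShare r α1 v u)

/-- A stable matching of the ordinal instance SRP_q. -/
def SRPqStable (G : SimpleGraph V) (r : V → V → ℝ) (α1 : ℝ)
    (M : V → Option V) : Prop :=
  IsMatching G M ∧ ∀ u v, ¬ SRPqBlocking G r α1 M u v

/-- Key lemma: if `u` is matched to `w` and strictly gains by rematching to `v`,
then `q^u_{uw} < q^u_{uv}`. -/
lemma key_gain (G : SimpleGraph V) (r : V → V → ℝ) (α : ℕ → ℝ)
    (hr : ∀ u v, 0 ≤ r u v) (hα : FriendshipVec α)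
    (M : V → Option V) (hM : IsMatching G M) (u v w : V)
    (hadj : G.Adj u v) (hnev : M u ≠ some v) (hw : M u = some w)
    (hlt : util G r α M u < util G r α (rematch M u v) u) :
    qShare r (α 1) u w < qShare r (α 1) u v := by
  have huv : u ≠ v := hadj.ne
  have hadjw : G.Adj u w := hM.1 u w hw
  have hMw : M w = some u := hM.2 u w hw
  have hwu : w ≠ u := hadjw.ne'
  have hwv : w ≠ v := by
    intro h; exact hnev (h ▸ hw)
  have hα1 : 0 ≤ α 1 := hα.2.2.1 1
  have hduv : α (G.dist u v) = α 1 := by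
    rw [(SimpleGraph.dist_eq_one_iff_adj).2 hadj]
  have hduw : α (G.dist u w) = α 1 := by
    rw [(SimpleGraph.dist_eq_one_iff_adj).2 hadjw]
  set M' := rematch M u v with hM'
  -- values of partnerReward in M and M'
  have hpru : partnerReward r M u = r u w := by
    unfold partnerReward; rw [hw]
  have hpru' : partnerReward r M' u = r u v := by
    unfold partnerReward; simp [hM', rematch]
  have hprv' : partnerReward r M' v = r v u := by
    unfold partnerReward; simp [hM', rematch, huv.symm]
  have hprw : partnerReward r M w = r w u := by
    unfold partnerReward; rw [hMw]
  have hprw' : partnerReward r M' w = 0 := by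
    unfold partnerReward; simp [hM', rematch, hwu, hwv, hMw]
  -- bound function
  set b : V → ℝ := fun x => if x = v then α 1 * r v u
    else if x = w then -(α 1 * r w u) else 0 with hb
  set s := univ.filter (fun x => x ≠ u) with hs
  have hsum_le : ∀ x ∈ s, α (G.dist u x) * partnerReward r M' x ≤
      α (G.dist u x) * partnerReward r M x + b x := by
    intro x hx
    have hxu : x ≠ u := (mem_filter.1 hx).2
    have hαd : 0 ≤ α (G.dist u x) := hα.2.2.1 _
    have hprM : 0 ≤ partnerReward r M x := partnerReward_nonneg r hr M x
    by_cases hxv : x = v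
    · have hbv : b x = α 1 * r v u := by simp [hb, hxv]
      have h1 : partnerReward r M' x = r v u := by rw [hxv]; exact hprv'
      have h2 : α (G.dist u x) = α 1 := by rw [hxv]; exact hduv
      rw [h1, h2, hbv]
      nlinarith [mul_nonneg hα1 hprM]
    · by_cases hxw : x = w
      · have hbw : b x = -(α 1 * r w u) := by simp [hb, hxw, hwv]
        have h1 : partnerReward r M' x = 0 := by rw [hxw]; exact hprw'
        have h2 : partnerReward r M x = r w u := by rw [hxw]; exact hprw
        have h3 : α (G.dist u x) = α 1 := by rw [hxw]; exact hduw
        rw [h1, h2, h3, hbw]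
        simp
      · have hbx : b x = 0 := by simp [hb, hxv, hxw]
        rw [hbx, add_zero]
        have : partnerReward r M' x = partnerReward r M x ∨
            partnerReward r M' x = 0 := by
          unfold partnerReward
          simp only [hM', rematch, if_neg hxu, if_neg hxv]
          by_cases hc : M x = some u ∨ M x = some v
          · right; simp [hc]
          · left; simp [hc]
        rcases this with h | h
        · rw [h]
        · rw [h, mul_zero]
          exact mul_nonneg hαd hprM
  have hsum : ∑ x ∈ s, α (G.dist u x) * partnerReward r M' x ≤
      (∑ x ∈ s, α (G.dist u x) * partnerReward r M x) + ∑ x ∈ s, b x := by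
    rw [← Finset.sum_add_distrib]
    exact Finset.sum_le_sum hsum_le
  have hbsum : ∑ x ∈ s, b x = α 1 * r v u - α 1 * r w u := by
    have hsub : ({v, w} : Finset V) ⊆ s := by
      intro x hx
      simp only [mem_insert, mem_singleton] at hx
      rcases hx with h | h <;> subst h <;>
        simp [hs, huv.symm, hwu]
    rw [← Finset.sum_subset hsub (by
      intro x hxs hxn
      simp only [mem_insert, mem_singleton, not_or] at hxn
      simp [hb, hxn.1, hxn.2])]
    rw [Finset.sum_pair (by intro h; exact hwv h.symm)]
    simp [hb, hwv, sub_eq_add_neg]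
  have hutil : util G r α M u = r u w +
      ∑ x ∈ s, α (G.dist u x) * partnerReward r M x := by
    unfold util; rw [hpru]
  have hutil' : util G r α M' u = r u v +
      ∑ x ∈ s, α (G.dist u x) * partnerReward r M' x := by
    unfold util; rw [hpru']
  rw [hutil, hutil'] at hlt
  unfold qShare
  rw [hbsum] at hsum
  linarith

/-- every stable matching of SRP_q is stable for the game with
general reward sharing and friendship utilities; hence existence in SRP_q implies
existence in the friendship game. -/
theorem srpq_stable_implies_friendship_stable
    (G : SimpleGraph V) (r : V → V → ℝ) (α : ℕ → ℝ)
    (hr_nonneg : ∀ u v, 0 ≤ r u v)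
    (hα : FriendshipVec α) :
    (∀ M : V → Option V, SRPqStable G r (α 1) M → StableMatching G r α M) ∧
    ((∃ M : V → Option V, SRPqStable G r (α 1) M) →
      ∃ M : V → Option V, StableMatching G r α M) := by
  have main : ∀ M : V → Option V, SRPqStable G r (α 1) M → StableMatching G r α M := by
    intro M hS
    obtain ⟨hM, hnb⟩ := hS
    refine ⟨hM, fun u v hbp => ?_⟩
    obtain ⟨hadj, hne, hu, hv⟩ := hbp
    apply hnb u v
    refine ⟨hadj, hne, ?_, ?_⟩
    · intro w hw
      exact key_gain G r α hr_nonneg hα M hM u v w hadj hne hw hu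
    · intro w hw
      have hnev : M v ≠ some u := by
        intro h
        exact hne (hM.2 v u h)
      have hv' : util G r α M v < util G r α (rematch M v u) v := by
        rwa [rematch_comm M hadj.ne] at hv
      exact key_gain G r α hr_nonneg hα M hM v u w hadj.symm hnev hw hv'
  exact ⟨main, fun ⟨M, hM⟩ => ⟨M, main M hM⟩⟩
end

section
/- In a best-relaxed-blocking-pair sequence of deviations starting from a maximum-weight matching, the first deviation must be a relaxed biswivel (not a swivel). -/
open Finset

variable {V : Type*} [Fintype V] [DecidableEq V]

/-- A relaxed blocking pair for (equal-sharing) rewards r with friendship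
parameters α₁ ≥ α₂: either an improving swivel (one of the nodes unmatched),
or a relaxed biswivel satisfying the two relaxed inequalities. -/
def RelaxedBP (G : SimpleGraph V) (r : V → V → ℝ) (α1 α2 : ℝ)
    (M : V → Option V) (u v : V) : Prop :=
  G.Adj u v ∧ M u ≠ some v ∧
    (((M u = none ∨ M v = none) ∧
        partnerReward r M u < r u v ∧ partnerReward r M v < r u v) ∨
      (∃ w z, M u = some w ∧ M v = some z ∧
        (1 + α1) * r u w + (α1 + α2) * r v z < (1 + α1) * r u v ∧
        (1 + α1) * r v z + (α1 + α2) * r u w < (1 + α1) * r u v))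

set_option linter.unusedSectionVars false
set_option linter.unusedVariables false

lemma rematch_isMatching (G : SimpleGraph V) (M : V → Option V) (hM : IsMatching G M)
    (u v : V) (huv : G.Adj u v) : IsMatching G (rematch M u v) := by
  obtain ⟨hadj, hsym⟩ := hM
  have hne : u ≠ v := huv.ne
  constructor
  · intro x y hxy
    unfold rematch at hxy
    split_ifs at hxy with h1 h2 h3
    · cases hxy; subst h1; exact huv
    · cases hxy; subst h2; exact huv.symm
    · exact hadj x y hxy
  · intro x y hxy
    unfold rematch at hxy
    split_ifs at hxy with h1 h2 h3
    · cases hxy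
      subst h1
      simp [rematch, hne.symm]
    · cases hxy
      subst h2
      simp [rematch]
    · have hyx : M y = some x := hsym x y hxy
      push_neg at h3
      have hyu : y ≠ u := by rintro rfl; exact h3.1 hxy
      have hyv : y ≠ v := by rintro rfl; exact h3.2 hxy
      simp only [rematch, if_neg hyu, if_neg hyv, hyx]
      have : ¬ (some x = some u ∨ some x = some v) := by
        push_neg; exact ⟨by simpa using h1, by simpa using h2⟩
      rw [if_neg this]

lemma swivel_improves (G : SimpleGraph V) (r : V → V → ℝ)
    (hr_symm : ∀ u v, r u v = r v u) (hr_nonneg : ∀ u v, 0 ≤ r u v)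
    (M : V → Option V) (hM : IsMatching G M) (u v : V) (huv : G.Adj u v)
    (hu : M u = none) (hv : partnerReward r M v < r u v) :
    matchWeight r M < matchWeight r (rematch M u v) := by
  obtain ⟨hadj, hsym⟩ := hM
  have hne : u ≠ v := huv.ne
  have hnotu : ∀ t, M t ≠ some u := by
    intro t ht
    have := hsym t u ht
    rw [hu] at this; exact Option.some_ne_none _ this.symm
  set M' := rematch M u v with hM'
  have hM'u : M' u = some v := by simp [hM', rematch]
  have hM'v : M' v = some u := by simp [hM', rematch, hne.symm]
  have hother : ∀ t, t ≠ u → t ≠ v → M t ≠ some v → M' t = M t := by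
    intro t h1 h2 h3
    simp only [hM', rematch, if_neg h1, if_neg h2]
    rw [if_neg]
    push_neg
    exact ⟨hnotu t, h3⟩
  set f : V → ℝ := fun t => partnerReward r M' t - partnerReward r M t with hf
  have key : 0 < ∑ t, f t := by
    rcases hvz : M v with _ | z
    · -- both unmatched
      have hsupp : ∀ t ∈ (univ : Finset V), t ∉ ({u, v} : Finset V) → f t = 0 := by
        intro t _ ht
        simp only [Finset.mem_insert, Finset.mem_singleton] at ht
        push_neg at ht
        have htv : M t ≠ some v := by
          intro h
          have := hsym t v h
          rw [hvz] at this; exact Option.some_ne_none _ this.symm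
        simp only [hf, partnerReward, hother t ht.1 ht.2 htv, sub_self]
      rw [← Finset.sum_subset (Finset.subset_univ ({u,v} : Finset V)) hsupp]
      rw [Finset.sum_pair hne]
      have h1 : f u = r u v := by simp [hf, partnerReward, hM'u, hu]
      have h2 : f v = r v u := by simp [hf, partnerReward, hM'v, hvz]
      rw [h1, h2, hr_symm v u]
      have : partnerReward r M u = 0 := by simp [partnerReward, hu]
      have hpv : partnerReward r M v = 0 := by simp [partnerReward, hvz]
      have := hr_nonneg u v
      linarith
    · -- v matched to z
      have hzv : M z = some v := hsym v z hvz
      have hzu : z ≠ u := by rintro rfl; rw [hu] at hzv; exact Option.some_ne_none _ hzv.symm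
      have hzz : z ≠ v := by
        rintro rfl
        exact (hadj _ _ hvz).ne rfl
      have hsupp : ∀ t ∈ (univ : Finset V), t ∉ ({u, v, z} : Finset V) → f t = 0 := by
        intro t _ ht
        simp only [Finset.mem_insert, Finset.mem_singleton] at ht
        push_neg at ht
        have htv : M t ≠ some v := by
          intro h
          have h2 := hsym t v h
          rw [hvz] at h2
          injection h2 with h3
          exact ht.2.2 h3.symm
        simp only [hf, partnerReward, hother t ht.1 ht.2.1 htv, sub_self]
      rw [← Finset.sum_subset (Finset.subset_univ ({u,v,z} : Finset V)) hsupp]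
      have hM'z : M' z = none := by
        simp only [hM', rematch, if_neg hzu, if_neg hzz]
        rw [if_pos (Or.inr hzv)]
      have h1 : f u = r u v := by simp [hf, partnerReward, hM'u, hu]
      have h2 : f v = r v u - r v z := by simp [hf, partnerReward, hM'v, hvz]
      have h3 : f z = - r z v := by simp [hf, partnerReward, hM'z, hzv]
      rw [Finset.sum_insert (by simp [hne, hzu.symm]),
          Finset.sum_insert (by simp [hzz.symm]), Finset.sum_singleton,
          h1, h2, h3]
      have hpv : partnerReward r M v = r v z := by simp [partnerReward, hvz]
      rw [hpv] at hv
      have := hr_symm v u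
      have := hr_symm z v
      linarith
  have : ∑ t, partnerReward r M t < ∑ t, partnerReward r M' t := by
    have := Finset.sum_sub_distrib (s := univ) (f := fun t => partnerReward r M' t)
      (g := fun t => partnerReward r M t)
    simp only [hf] at key
    linarith [key, this]
  unfold matchWeight
  linarith

/-- starting from a maximum-weight matching, the first deviation of
the best-relaxed-blocking-pair dynamics must be a relaxed biswivel, i.e. both
members of any relaxed blocking pair of the maximum-weight matching are matched. -/
theorem first_deviation_is_relaxed_biswivel
    (G : SimpleGraph V) (r : V → V → ℝ) (α1 α2 : ℝ)
    (hr_symm : ∀ u v, r u v = r v u) (hr_nonneg : ∀ u v, 0 ≤ r u v)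
    (hα2 : 0 ≤ α2) (hα12 : α2 ≤ α1) (hα1 : α1 ≤ 1)
    (Mstar : V → Option V) (hMstar : IsMatching G Mstar)
    (hmax : ∀ M : V → Option V, IsMatching G M → matchWeight r M ≤ matchWeight r Mstar)
    (u v : V) (hbp : RelaxedBP G r α1 α2 Mstar u v) :
    ∃ w z, Mstar u = some w ∧ Mstar v = some z := by
  obtain ⟨hadj, hnot, hcases⟩ := hbp
  rcases hcases with ⟨hnone, hu, hv⟩ | ⟨w, z, hw, hz, _, _⟩
  · exfalso
    rcases hnone with h | h
    · have h1 := swivel_improves G r hr_symm hr_nonneg Mstar hMstar u v hadj h hv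
      have h2 := hmax _ (rematch_isMatching G Mstar hMstar u v hadj)
      linarith
    · have hvu : r v u = r u v := hr_symm v u
      have h1 := swivel_improves G r hr_symm hr_nonneg Mstar hMstar v u hadj.symm h (hvu ▸ hu)
      have h2 := hmax _ (rematch_isMatching G Mstar hMstar v u hadj.symm)
      linarith
  · exact ⟨w, z, hw, hz⟩
end

section
/- In a convex contribution game where players need not spend all of their budget, every stable matching of the corresponding stable matching game yields a pairwise equilibrium with the same structure and total reward: matched nodes put their full budget on their matched edge and unmatched nodes contribute nothing. -/
open Finset

variable {V : Type*} [Fintype V] [DecidableEq V]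

/-- A reward function of class C₀: nonnegative, nondecreasing and convex in each
argument (on the nonnegative reals), and zero whenever either contribution is 0. -/
def C0fun (f : ℝ → ℝ → ℝ) : Prop :=
  (∀ x y, 0 ≤ f x y) ∧
  (∀ y, MonotoneOn (fun x => f x y) (Set.Ici 0)) ∧
  (∀ x, MonotoneOn (fun y => f x y) (Set.Ici 0)) ∧
  (∀ y, ConvexOn ℝ (Set.Ici 0) (fun x => f x y)) ∧
  (∀ x, ConvexOn ℝ (Set.Ici 0) (fun y => f x y)) ∧
  (∀ x, f x 0 = 0) ∧ (∀ y, f 0 y = 0)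

/-- A valid strategy profile: nonnegative contributions, only on incident edges,
with total contribution of each node at most its budget. -/
def ValidProfile (G : SimpleGraph V) (B : V → ℝ) (s : V → V → ℝ) : Prop :=
  (∀ v u, 0 ≤ s v u) ∧ (∀ v u, ¬ G.Adj v u → s v u = 0) ∧ (∀ v, ∑ u, s v u ≤ B v)

/-- A valid strategy profile with tight budget constraints: each node spends
exactly its budget. -/
def ValidTightProfile (G : SimpleGraph V) (B : V → ℝ) (s : V → V → ℝ) : Prop :=
  (∀ v u, 0 ≤ s v u) ∧ (∀ v u, ¬ G.Adj v u → s v u = 0) ∧ (∀ v, ∑ u, s v u = B v)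

/-- The total reward collected by node v, where f v u is the reward function
giving v's reward share on edge (v,u). -/
noncomputable def nodeReward (G : SimpleGraph V) [DecidableRel G.Adj]
    (f : V → V → ℝ → ℝ → ℝ) (s : V → V → ℝ) (v : V) : ℝ :=
  ∑ u ∈ G.neighborFinset v, f v u (s v u) (s u v)

/-- The perceived (friendship) utility of node v in the contribution game. -/
noncomputable def ccgUtil (G : SimpleGraph V) [DecidableRel G.Adj]
    (f : V → V → ℝ → ℝ → ℝ) (α : ℕ → ℝ) (s : V → V → ℝ) (v : V) : ℝ :=
  nodeReward G f s v +
    ∑ u ∈ univ.filter (fun u => u ≠ v), α (G.dist v u) * nodeReward G f s u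

/-- Pairwise equilibrium: no improving unilateral deviation, and no bilateral
deviation strictly improving the perceived utility of both deviators. -/
def PairwiseEq (G : SimpleGraph V) [DecidableRel G.Adj] (B : V → ℝ)
    (f : V → V → ℝ → ℝ → ℝ) (α : ℕ → ℝ) (s : V → V → ℝ) : Prop :=
  ValidProfile G B s ∧
  (∀ v s', ValidProfile G B s' → (∀ x, x ≠ v → s' x = s x) →
    ccgUtil G f α s' v ≤ ccgUtil G f α s v) ∧
  (∀ u v s', ValidProfile G B s' → (∀ x, x ≠ u → x ≠ v → s' x = s x) →
    ¬ (ccgUtil G f α s u < ccgUtil G f α s' u ∧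
        ccgUtil G f α s v < ccgUtil G f α s' v))

/-- Pairwise equilibrium under tight budget constraints. -/
def PairwiseEqTight (G : SimpleGraph V) [DecidableRel G.Adj] (B : V → ℝ)
    (f : V → V → ℝ → ℝ → ℝ) (α : ℕ → ℝ) (s : V → V → ℝ) : Prop :=
  ValidTightProfile G B s ∧
  (∀ v s', ValidTightProfile G B s' → (∀ x, x ≠ v → s' x = s x) →
    ccgUtil G f α s' v ≤ ccgUtil G f α s v) ∧
  (∀ u v s', ValidTightProfile G B s' → (∀ x, x ≠ u → x ≠ v → s' x = s x) →
    ¬ (ccgUtil G f α s u < ccgUtil G f α s' u ∧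
        ccgUtil G f α s v < ccgUtil G f α s' v))


section Helpers

set_option linter.unusedSectionVars false

lemma convexFrac {g : ℝ → ℝ} (hg : ConvexOn ℝ (Set.Ici 0) g) (h0 : g 0 = 0)
    {x c : ℝ} (hx : 0 ≤ x) (hxc : x ≤ c) : g x ≤ (x / c) * g c := by
  rcases eq_or_lt_of_le (hx.trans hxc) with hc | hc
  · have hx0 : x = 0 := le_antisymm (hxc.trans hc.ge) hx
    subst hx0
    simp [h0]
  · have ha : (0:ℝ) ≤ 1 - x / c := by
      have : x / c ≤ 1 := (div_le_one hc).mpr hxc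
      linarith
    have h1 := hg.2 (Set.mem_Ici.mpr le_rfl) (Set.mem_Ici.mpr (hx.trans hxc))
      ha (div_nonneg hx hc.le) (by ring)
    have h2 : (1 - x / c) • (0:ℝ) + (x / c) • c = x := by
      have : (x / c) * c = x := div_mul_cancel₀ x hc.ne'
      simp [smul_eq_mul, this]
    rw [h2] at h1
    simpa [h0, smul_eq_mul] using h1

lemma valid_le_budget {G : SimpleGraph V} {B : V → ℝ} {s' : V → V → ℝ}
    (hv : ValidProfile G B s') (x w : V) : s' x w ≤ B x :=
  le_trans (Finset.single_le_sum (fun i _ => hv.1 x i) (mem_univ w)) (hv.2.2 x)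

lemma nodeReward_matchProfile (G : SimpleGraph V) [DecidableRel G.Adj]
    (B : V → ℝ) (f : V → V → ℝ → ℝ → ℝ)
    (hf : ∀ u v, G.Adj u v → C0fun (f u v)) (M : V → Option V)
    (hIsM : IsMatching G M) (v : V) :
    nodeReward G f (fun v u => if M v = some u then B v else 0) v
      = partnerReward (fun u v => f u v (B u) (B v)) M v := by
  unfold nodeReward partnerReward
  rcases hv : M v with _ | w
  · rw [Finset.sum_eq_zero]
    intro u hu
    have hadj := (SimpleGraph.mem_neighborFinset G v u).mp hu
    simp only [hv, reduceCtorEq, if_false]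
    exact (hf v u hadj).2.2.2.2.2.2 _
  · have hadj : G.Adj v w := hIsM.1 v w hv
    have hw : w ∈ G.neighborFinset v := (SimpleGraph.mem_neighborFinset G v w).mpr hadj
    rw [Finset.sum_eq_single w]
    · simp [hv, hIsM.2 v w hv]
    · intro u hu hne
      have hadj' := (SimpleGraph.mem_neighborFinset G v u).mp hu
      have hMv : M v ≠ some u := by simp [hv]; exact fun h => hne h.symm
      simp only [hMv, if_false]
      exact (hf v u hadj').2.2.2.2.2.2 _
    · exact fun h => absurd hw h

end Helpers

section Helpers2
set_option linter.unusedSectionVars false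
variable {V : Type*} [Fintype V] [DecidableEq V]

/-- termwise monotone bound: deviations that never put money on both ends of a
non-matched edge can only decrease every node's reward. -/
lemma nodeReward_le_matchProfile (G : SimpleGraph V) [DecidableRel G.Adj]
    (B : V → ℝ) (f : V → V → ℝ → ℝ → ℝ)
    (hf : ∀ u v, G.Adj u v → C0fun (f u v)) (M : V → Option V)
    (hIsM : IsMatching G M) (s' : V → V → ℝ) (hval : ValidProfile G B s')
    (hcond : ∀ x w, G.Adj x w → M w ≠ some x → s' w x = 0 ∨ s' x w = 0) (x : V) :
    nodeReward G f s' x ≤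
      nodeReward G f (fun v u => if M v = some u then B v else 0) x := by
  apply Finset.sum_le_sum
  intro w hw
  have hadj := (SimpleGraph.mem_neighborFinset G x w).mp hw
  have hC := hf x w hadj
  by_cases hMw : M w = some x
  · have hMx : M x = some w := hIsM.2 w x hMw
    simp only [hMx, hMw, if_pos]
    have h1 : f x w (s' x w) (s' w x) ≤ f x w (B x) (s' w x) :=
      hC.2.1 (s' w x) (Set.mem_Ici.mpr (hval.1 x w))
        (Set.mem_Ici.mpr ((hval.1 x w).trans (valid_le_budget hval x w)))
        (valid_le_budget hval x w)
    have h2 : f x w (B x) (s' w x) ≤ f x w (B x) (B w) :=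
      hC.2.2.1 (B x) (Set.mem_Ici.mpr (hval.1 w x))
        (Set.mem_Ici.mpr ((hval.1 w x).trans (valid_le_budget hval w x)))
        (valid_le_budget hval w x)
    exact h1.trans h2
  · have hMx : M x ≠ some w := fun h => hMw (hIsM.2 x w h)
    simp only [hMx, if_false]
    rw [hC.2.2.2.2.2.2]
    rcases hcond x w hadj hMw with h0 | h0
    · rw [h0, hC.2.2.2.2.2.1]
    · rw [h0, hC.2.2.2.2.2.2]

lemma ccgUtil_mono (G : SimpleGraph V) [DecidableRel G.Adj]
    (f : V → V → ℝ → ℝ → ℝ) (α : ℕ → ℝ) (hα : ∀ n, 0 ≤ α n)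
    (s s' : V → V → ℝ) (h : ∀ x, nodeReward G f s' x ≤ nodeReward G f s x)
    (w : V) : ccgUtil G f α s' w ≤ ccgUtil G f α s w := by
  unfold ccgUtil
  apply add_le_add (h w)
  exact Finset.sum_le_sum fun x _ =>
    mul_le_mul_of_nonneg_left (h x) (hα _)

/-- the abstract sum-comparison lemma. -/
lemma utilDiff_le (α : ℕ → ℝ) (hα : ∀ n, 0 ≤ α n) (d : V → ℕ)
    (p p' q q' : V → ℝ) (t : ℝ)
    (h : ∀ x, p' x - p x ≤ t * (q' x - q x)) (w : V) :
    (p' w + ∑ x ∈ univ.filter (fun x => x ≠ w), α (d x) * p' x) -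
      (p w + ∑ x ∈ univ.filter (fun x => x ≠ w), α (d x) * p x) ≤
    t * ((q' w + ∑ x ∈ univ.filter (fun x => x ≠ w), α (d x) * q' x) -
      (q w + ∑ x ∈ univ.filter (fun x => x ≠ w), α (d x) * q x)) := by
  have hsum : ∑ x ∈ univ.filter (fun x => x ≠ w),
      (α (d x) * p' x - α (d x) * p x) ≤
      ∑ x ∈ univ.filter (fun x => x ≠ w),
      (t * (α (d x) * q' x) - t * (α (d x) * q x)) := by
    apply Finset.sum_le_sum
    intro x _
    have key := mul_le_mul_of_nonneg_left (h x) (hα (d x))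
    nlinarith [key]
  rw [Finset.sum_sub_distrib, Finset.sum_sub_distrib, ← Finset.mul_sum,
    ← Finset.mul_sum] at hsum
  have hw := h w
  rw [mul_sub] at hw
  rw [mul_sub, mul_add, mul_add]
  linarith

end Helpers2

section Helpers3
set_option linter.unusedSectionVars false
variable {V : Type*} [Fintype V] [DecidableEq V]

lemma crossBound1 {f : ℝ → ℝ → ℝ} (hC : C0fun f) {a c Bx Bw : ℝ}
    (ha : 0 ≤ a) (haB : a ≤ Bx) (hc : 0 ≤ c) (hcB : c ≤ Bw) :
    f a c ≤ (a / Bx) * f Bx Bw := by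
  have h1 : f a c ≤ (a / Bx) * f Bx c :=
    convexFrac (hC.2.2.2.1 c) (hC.2.2.2.2.2.2 c) ha haB
  have h2 : f Bx c ≤ f Bx Bw :=
    hC.2.2.1 Bx (Set.mem_Ici.mpr hc) (Set.mem_Ici.mpr (hc.trans hcB)) hcB
  exact h1.trans (mul_le_mul_of_nonneg_left h2 (div_nonneg ha (ha.trans haB)))

lemma crossBound2 {f : ℝ → ℝ → ℝ} (hC : C0fun f) {a c Bx Bw : ℝ}
    (ha : 0 ≤ a) (haB : a ≤ Bx) (hc : 0 ≤ c) (hcB : c ≤ Bw) :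
    f a c ≤ (c / Bw) * f Bx Bw := by
  have h1 : f a c ≤ (c / Bw) * f a Bw :=
    convexFrac (hC.2.2.2.2.1 a) (hC.2.2.2.2.2.1 a) hc hcB
  have h2 : f a Bw ≤ f Bx Bw :=
    hC.2.1 Bw (Set.mem_Ici.mpr ha) (Set.mem_Ici.mpr (ha.trans haB)) haB
  exact h1.trans (mul_le_mul_of_nonneg_left h2 (div_nonneg hc (hc.trans hcB)))

lemma devBound (G : SimpleGraph V) [DecidableRel G.Adj] (B : V → ℝ)
    (f : V → V → ℝ → ℝ → ℝ) (hB : ∀ v, 0 ≤ B v)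
    (hf : ∀ u v, G.Adj u v → C0fun (f u v)) (M : V → Option V)
    (hIsM : IsMatching G M) (u v : V)
    (hAdj : G.Adj u v) (hMuv : M u ≠ some v) (s' : V → V → ℝ)
    (hval : ValidProfile G B s')
    (hagree : ∀ x, x ≠ u → x ≠ v → s' x = fun w => if M x = some w then B x else 0)
    (t : ℝ) (ht0 : 0 ≤ t)
    (htcross : f u v (s' u v) (s' v u) ≤ t * f u v (B u) (B v))
    (htfrac : t ≤ s' u v / B u) :
    ∃ lam, 0 ≤ lam ∧ lam + t ≤ 1 ∧
      nodeReward G f s' u ≤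
        lam * partnerReward (fun x y => f x y (B x) (B y)) M u
          + t * f u v (B u) (B v) ∧
      ∀ x, M x = some u → nodeReward G f s' x ≤ lam * f x u (B x) (B u) := by
  have huv : u ≠ v := hAdj.ne
  have hMvu : M v ≠ some u := fun h => hMuv (hIsM.2 v u h)
  -- the generic sum bound for u's reward
  have bound_u : nodeReward G f s' u ≤
      ∑ w, ((if M u = some w then (s' u w / B u) * f u w (B u) (B w) else 0)
        + (if w = v then t * f u v (B u) (B v) else 0)) := by
    have step1 : nodeReward G f s' u ≤
        ∑ w ∈ G.neighborFinset u,
          ((if M u = some w then (s' u w / B u) * f u w (B u) (B w) else 0)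
            + (if w = v then t * f u v (B u) (B v) else 0)) := by
      apply Finset.sum_le_sum
      intro w hw
      have hadjw := (SimpleGraph.mem_neighborFinset G u w).mp hw
      have hC := hf u w hadjw
      by_cases hMw : M u = some w
      · have hwv : w ≠ v := fun h => hMuv (h ▸ hMw)
        simp only [hMw, if_pos, hwv, if_false, add_zero]
        exact crossBound1 hC (hval.1 u w) (valid_le_budget hval u w)
          (hval.1 w u) (valid_le_budget hval w u)
      · by_cases hwv : w = v
        · subst hwv
          simp only [hMw, if_false, if_pos, zero_add]
          exact htcross
        · simp only [hMw, hwv, if_false, add_zero]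
          have hwu : w ≠ u := hadjw.ne'
          have hMwu : M w ≠ some u := fun h => hMw (hIsM.2 w u h)
          have hrow : s' w u = 0 := by
            rw [congrFun (hagree w hwu hwv) u, if_neg hMwu]
          rw [hrow, hC.2.2.2.2.2.1]
    refine step1.trans (Finset.sum_le_sum_of_subset_of_nonneg (Finset.subset_univ _) ?_)
    intro w _ _
    apply add_nonneg
    · split
      · next hMw =>
        exact mul_nonneg (div_nonneg (hval.1 u w) (hB u))
          ((hf u w (hIsM.1 u w hMw)).1 _ _)
      · exact le_rfl
    · split
      · next hwv => exact mul_nonneg ht0 ((hf u v hAdj).1 _ _)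
      · exact le_rfl
  rw [Finset.sum_add_distrib] at bound_u
  have hsum2 : (∑ w, if w = v then t * f u v (B u) (B v) else 0)
      = t * f u v (B u) (B v) := by simp
  rw [hsum2] at bound_u
  -- partner-of-u clause helper
  have partner_clause : ∀ x, M x = some u →
      nodeReward G f s' x ≤ (s' u x / B u) * f x u (B x) (B u) := by
    intro x hx
    have hadjxu : G.Adj x u := hIsM.1 x u hx
    have hCxu := hf x u hadjxu
    have hxu : x ≠ u := hadjxu.ne
    have hxv : x ≠ v := fun h => hMvu (h ▸ hx)
    have hrow := hagree x hxu hxv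
    have step1 : nodeReward G f s' x ≤
        ∑ w ∈ G.neighborFinset x,
          (if w = u then (s' u x / B u) * f x u (B x) (B u) else 0) := by
      apply Finset.sum_le_sum
      intro w hw
      have hadjw := (SimpleGraph.mem_neighborFinset G x w).mp hw
      by_cases hwu : w = u
      · rw [hwu]
        rw [if_pos rfl, congrFun hrow u, if_pos hx]
        exact crossBound2 hCxu (hB x) le_rfl (hval.1 u x) (valid_le_budget hval u x)
      · rw [if_neg hwu, congrFun hrow w,
          if_neg (fun h : M x = some w => hwu (by rw [hx] at h; exact (Option.some_inj.mp h).symm))]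
        exact le_of_eq ((hf x w hadjw).2.2.2.2.2.2 _)
    refine (step1.trans (Finset.sum_le_sum_of_subset_of_nonneg (Finset.subset_univ _) ?_)).trans ?_
    · intro w _ _
      split
      · exact mul_nonneg (div_nonneg (hval.1 u x) (hB u)) (hCxu.1 _ _)
      · exact le_rfl
    · simp
  rcases hMu : M u with _ | mu
  · refine ⟨0, le_rfl, ?_, ?_, ?_⟩
    · have : s' u v / B u ≤ 1 := div_le_one_of_le₀ (valid_le_budget hval u v) (hB u)
      linarith
    · have : (∑ w, if M u = some w then (s' u w / B u) * f u w (B u) (B w) else 0) = 0 := by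
        apply Finset.sum_eq_zero
        intro w _
        rw [if_neg (by rw [hMu]; exact fun h => nomatch h)]
      rw [this] at bound_u
      simpa [partnerReward, hMu] using bound_u
    · intro x hx
      exact absurd (hIsM.2 x u hx) (by rw [hMu]; exact fun h => nomatch h)
  · have hmuv : mu ≠ v := fun h => hMuv (h ▸ hMu)
    refine ⟨s' u mu / B u, div_nonneg (hval.1 u mu) (hB u), ?_, ?_, ?_⟩
    · have hd : s' u mu / B u + s' u v / B u = (s' u mu + s' u v) / B u :=
        (add_div _ _ _).symm
      have hsumle : s' u mu + s' u v ≤ B u := by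
        have h1 : ∑ w ∈ ({mu, v} : Finset V), s' u w ≤ ∑ w, s' u w :=
          Finset.sum_le_sum_of_subset_of_nonneg (Finset.subset_univ _)
            (fun i _ _ => hval.1 u i)
        rw [Finset.sum_pair hmuv] at h1
        exact h1.trans (hval.2.2 u)
      have : (s' u mu + s' u v) / B u ≤ 1 :=
        div_le_one_of_le₀ hsumle (hB u)
      linarith
    · have : (∑ w, if M u = some w then (s' u w / B u) * f u w (B u) (B w) else 0)
          = (s' u mu / B u) * f u mu (B u) (B mu) := by
        rw [Finset.sum_eq_single mu]
        · rw [if_pos hMu]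
        · intro w _ hne
          rw [if_neg (by rw [hMu]; exact fun h => hne (Option.some_inj.mp h).symm)]
        · exact fun h => absurd (Finset.mem_univ mu) h
      rw [this] at bound_u
      simpa [partnerReward, hMu] using bound_u
    · intro x hx
      have : M u = some x := hIsM.2 x u hx
      rw [hMu] at this
      have hxmu : mu = x := Option.some_inj.mp this
      subst hxmu
      exact partner_clause _ hx
end Helpers3

/-- in a convex contribution game (budget need not be fully spent),
every stable matching of the corresponding stable matching game (with reward
shares f u v (B u) (B v)) yields a pairwise equilibrium of the same structure and
the same total reward: matched nodes put their full budget on their matched edge,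
unmatched nodes contribute nothing. -/
theorem ccg_stable_matching_gives_pairwise_eq
    (G : SimpleGraph V) [DecidableRel G.Adj] (B : V → ℝ)
    (f : V → V → ℝ → ℝ → ℝ) (α : ℕ → ℝ)
    (hB : ∀ v, 0 ≤ B v)
    (hf : ∀ u v, G.Adj u v → C0fun (f u v))
    (hα : FriendshipVec α)
    (M : V → Option V)
    (hM : StableMatching G (fun u v => f u v (B u) (B v)) α M) :
    PairwiseEq G B f α (fun v u => if M v = some u then B v else 0) ∧
    (∀ v, nodeReward G f (fun v u => if M v = some u then B v else 0) v =
      partnerReward (fun u v => f u v (B u) (B v)) M v) ∧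
    (∑ v, nodeReward G f (fun v u => if M v = some u then B v else 0) v =
      totalWeight (fun u v => f u v (B u) (B v)) M) := by
  obtain ⟨hIsM, hstab⟩ := hM
  have hα' : ∀ n, 0 ≤ α n := hα.2.2.1
  have hnodeEq := nodeReward_matchProfile G B f hf M hIsM
  have prnn : ∀ x, 0 ≤ partnerReward (fun u v => f u v (B u) (B v)) M x := by
    intro x
    unfold partnerReward
    rcases hx : M x with _ | w
    · exact le_rfl
    · exact (hf x w (hIsM.1 x w hx)).1 _ _
  -- validity of the induced profile
  have hvalid : ValidProfile G B (fun v u => if M v = some u then B v else 0) := by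
    refine ⟨fun v u => ?_, fun v u hnadj => ?_, fun v => ?_⟩
    · dsimp only
      split
      · exact hB v
      · exact le_rfl
    · dsimp only
      exact if_neg (fun h => hnadj (hIsM.1 v u h))
    · rcases hv : M v with _ | w
      · simp [hv, hB v]
      · rw [Finset.sum_eq_single w]
        · simp [hv]
        · intro u _ hne
          exact if_neg (by simp [hv]; exact fun h => hne h.symm)
        · exact fun h => absurd (Finset.mem_univ w) h
  -- the condition of nodeReward_le_matchProfile for one or two deviators
  -- in the "easy" situations
  have easy_mono : ∀ (u v : V) (s' : V → V → ℝ), ValidProfile G B s' →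
      (∀ x, x ≠ u → x ≠ v → s' x = fun w => if M x = some w then B x else 0) →
      (u = v ∨ M u = some v ∨ ¬ G.Adj u v) →
      ∀ x, nodeReward G f s' x ≤
        nodeReward G f (fun v u => if M v = some u then B v else 0) x := by
    intro u v s' hval hag hcase
    apply nodeReward_le_matchProfile G B f hf M hIsM s' hval
    intro x w hadj hMw
    by_cases hxu : x = u
    · by_cases hxv2 : x = v
      · -- x = u = v : w ≠ x, so w not a deviator
        left
        rw [congrFun (hag w (fun h => hadj.ne' (h.trans hxu.symm))
          (fun h => hadj.ne' (h.trans hxv2.symm))) x, if_neg hMw]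
      · -- x = u, x ≠ v
        subst hxu
        rcases hcase with h | h | h
        · exact absurd h hxv2
        · by_cases hwv : w = v
          · exact absurd (hwv ▸ (hIsM.2 x v h)) hMw
          · left
            rw [congrFun (hag w hadj.ne' hwv) x, if_neg hMw]
        · by_cases hwv : w = v
          · exact absurd (hwv ▸ hadj) h
          · left
            rw [congrFun (hag w hadj.ne' hwv) x, if_neg hMw]
    · by_cases hxv : x = v
      · subst hxv
        rcases hcase with h | h | h
        · exact absurd h.symm hxu
        · by_cases hwu : w = u
          · subst hwu
            have : M x = some w := hIsM.2 w x h
            exact absurd (hIsM.2 x w this) hMw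
          · left
            rw [congrFun (hag w hwu hadj.ne') x, if_neg hMw]
        · by_cases hwu : w = u
          · exact absurd (hwu ▸ hadj.symm) h
          · left
            rw [congrFun (hag w hwu hadj.ne') x, if_neg hMw]
      · right
        rw [congrFun (hag x hxu hxv) w,
          if_neg (fun h2 : M x = some w => hMw (hIsM.2 x w h2))]
  refine ⟨⟨hvalid, ?_, ?_⟩, hnodeEq, Finset.sum_congr rfl fun v _ => hnodeEq v⟩
  · -- unilateral deviations
    intro v s' hval' hag
    exact ccgUtil_mono G f α hα' _ s'
      (easy_mono v v s' hval' (fun x h1 _ => hag x h1) (Or.inl rfl)) v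
  · -- bilateral deviations
    intro u v s' hval' hag
    rintro ⟨hu, hv2⟩
    by_cases huv : u = v
    · exact absurd hu (not_lt.mpr (ccgUtil_mono G f α hα' _ s'
        (easy_mono u v s' hval' hag (Or.inl huv)) u))
    by_cases hMuv : M u = some v
    · exact absurd hu (not_lt.mpr (ccgUtil_mono G f α hα' _ s'
        (easy_mono u v s' hval' hag (Or.inr (Or.inl hMuv))) u))
    by_cases hAdjuv : G.Adj u v
    swap
    · exact absurd hu (not_lt.mpr (ccgUtil_mono G f α hα' _ s'
        (easy_mono u v s' hval' hag (Or.inr (Or.inr hAdjuv))) u))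
    -- main case
    have hMvu : M v ≠ some u := fun h => hMuv (hIsM.2 v u h)
    set t := min (s' u v / B u) (s' v u / B v) with ht
    have ht0 : 0 ≤ t := le_min (div_nonneg (hval'.1 u v) (hB u))
      (div_nonneg (hval'.1 v u) (hB v))
    have hCuv := hf u v hAdjuv
    have hCvu := hf v u hAdjuv.symm
    have htcross_u : f u v (s' u v) (s' v u) ≤ t * f u v (B u) (B v) := by
      rcases le_total (s' u v / B u) (s' v u / B v) with h | h
      · rw [ht, min_eq_left h]
        exact crossBound1 hCuv (hval'.1 u v) (valid_le_budget hval' u v)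
          (hval'.1 v u) (valid_le_budget hval' v u)
      · rw [ht, min_eq_right h]
        exact crossBound2 hCuv (hval'.1 u v) (valid_le_budget hval' u v)
          (hval'.1 v u) (valid_le_budget hval' v u)
    have htcross_v : f v u (s' v u) (s' u v) ≤ t * f v u (B v) (B u) := by
      rcases le_total (s' u v / B u) (s' v u / B v) with h | h
      · rw [ht, min_eq_left h]
        exact crossBound2 hCvu (hval'.1 v u) (valid_le_budget hval' v u)
          (hval'.1 u v) (valid_le_budget hval' u v)
      · rw [ht, min_eq_right h]
        exact crossBound1 hCvu (hval'.1 v u) (valid_le_budget hval' v u)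
          (hval'.1 u v) (valid_le_budget hval' u v)
    obtain ⟨lamU, hlamU0, hlamUt, hboundU, hpartU⟩ :=
      devBound G B f hB hf M hIsM u v hAdjuv hMuv s' hval' hag t ht0
        htcross_u (min_le_left _ _)
    obtain ⟨lamV, hlamV0, hlamVt, hboundV, hpartV⟩ :=
      devBound G B f hB hf M hIsM v u hAdjuv.symm hMvu s' hval'
        (fun x h1 h2 => hag x h2 h1) t ht0 htcross_v (min_le_right _ _)
    -- the per-node comparison inequality
    have hD : ∀ x, nodeReward G f s' x - partnerReward (fun u v => f u v (B u) (B v)) M x ≤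
        t * (partnerReward (fun u v => f u v (B u) (B v)) (rematch M u v) x -
          partnerReward (fun u v => f u v (B u) (B v)) M x) := by
      intro x
      by_cases hxu : x = u
      · subst hxu
        have hpr : partnerReward (fun u v => f u v (B u) (B v)) (rematch M x v) x
            = f x v (B x) (B v) := by
          simp [partnerReward, rematch]
        rw [hpr, mul_sub]
        have key := mul_le_mul_of_nonneg_right hlamUt (prnn x)
        nlinarith [hboundU, key]
      by_cases hxv : x = v
      · subst hxv
        have hpr : partnerReward (fun u v => f u v (B u) (B v)) (rematch M u x) x
            = f x u (B x) (B u) := by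
          simp [partnerReward, rematch, huv, Ne.symm huv]
        rw [hpr, mul_sub]
        have key := mul_le_mul_of_nonneg_right hlamVt (prnn x)
        nlinarith [hboundV, key]
      by_cases hxMu : M x = some u
      · have hpr : partnerReward (fun u v => f u v (B u) (B v)) M x
            = f x u (B x) (B u) := by
          simp [partnerReward, hxMu]
        have hprR : partnerReward (fun u v => f u v (B u) (B v)) (rematch M u v) x
            = 0 := by
          simp [partnerReward, rematch, hxu, hxv, hxMu]
        rw [hpr, hprR, mul_sub, mul_zero]
        have hrnn : 0 ≤ f x u (B x) (B u) := (hf x u (hIsM.1 x u hxMu)).1 _ _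
        have key := mul_le_mul_of_nonneg_right hlamUt hrnn
        nlinarith [hpartU x hxMu, key]
      by_cases hxMv : M x = some v
      · have hpr : partnerReward (fun u v => f u v (B u) (B v)) M x
            = f x v (B x) (B v) := by
          simp [partnerReward, hxMv]
        have hprR : partnerReward (fun u v => f u v (B u) (B v)) (rematch M u v) x
            = 0 := by
          simp [partnerReward, rematch, hxu, hxv, hxMv]
        rw [hpr, hprR, mul_sub, mul_zero]
        have hrnn : 0 ≤ f x v (B x) (B v) := (hf x v (hIsM.1 x v hxMv)).1 _ _
        have key := mul_le_mul_of_nonneg_right hlamVt hrnn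
        nlinarith [hpartV x hxMv, key]
      · -- unchanged node
        have hrematch : rematch M u v x = M x := by
          simp [rematch, hxu, hxv, hxMu, hxMv]
        have hunchanged : nodeReward G f s' x =
            nodeReward G f (fun v u => if M v = some u then B v else 0) x := by
          apply Finset.sum_congr rfl
          intro w hw
          have hadjw := (SimpleGraph.mem_neighborFinset G x w).mp hw
          have hrow := hag x hxu hxv
          by_cases hwu : w = u
          · subst hwu
            have h1 : s' x w = 0 := by rw [congrFun hrow w]; simp [hxMu]
            simp [h1, hxMu, (hf x w hadjw).2.2.2.2.2.2]
          by_cases hwv : w = v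
          · subst hwv
            have h1 : s' x w = 0 := by rw [congrFun hrow w]; simp [hxMv]
            simp [h1, hxMv, (hf x w hadjw).2.2.2.2.2.2]
          · rw [congrFun hrow w, congrFun (hag w hwu hwv) x]
        rw [hunchanged, hnodeEq x]
        unfold partnerReward
        rw [hrematch]
        simp
    -- translate ccgUtil of the matching profile to util
    have hutil : ∀ w, ccgUtil G f α (fun v u => if M v = some u then B v else 0) w
        = util G (fun u v => f u v (B u) (B v)) α M w := by
      intro w
      unfold ccgUtil util
      rw [hnodeEq w]
      congr 1
      exact Finset.sum_congr rfl fun x _ => by rw [hnodeEq x]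
    have hDu := utilDiff_le α hα' (fun x => G.dist u x)
      (partnerReward (fun u v => f u v (B u) (B v)) M) (nodeReward G f s')
      (partnerReward (fun u v => f u v (B u) (B v)) M)
      (partnerReward (fun u v => f u v (B u) (B v)) (rematch M u v)) t hD u
    have hDv := utilDiff_le α hα' (fun x => G.dist v x)
      (partnerReward (fun u v => f u v (B u) (B v)) M) (nodeReward G f s')
      (partnerReward (fun u v => f u v (B u) (B v)) M)
      (partnerReward (fun u v => f u v (B u) (B v)) (rematch M u v)) t hD v
    have eDu : ccgUtil G f α s' u -
        util G (fun u v => f u v (B u) (B v)) α M u ≤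
        t * (util G (fun u v => f u v (B u) (B v)) α (rematch M u v) u -
          util G (fun u v => f u v (B u) (B v)) α M u) := hDu
    have eDv : ccgUtil G f α s' v -
        util G (fun u v => f u v (B u) (B v)) α M v ≤
        t * (util G (fun u v => f u v (B u) (B v)) α (rematch M u v) v -
          util G (fun u v => f u v (B u) (B v)) α M v) := hDv
    rw [hutil u] at hu
    rw [hutil v] at hv2
    have hposu : 0 < t * (util G (fun u v => f u v (B u) (B v)) α (rematch M u v) u -
        util G (fun u v => f u v (B u) (B v)) α M u) := by linarith
    have hposv : 0 < t * (util G (fun u v => f u v (B u) (B v)) α (rematch M u v) v -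
        util G (fun u v => f u v (B u) (B v)) α M v) := by linarith
    have hblocku : util G (fun u v => f u v (B u) (B v)) α M u <
        util G (fun u v => f u v (B u) (B v)) α (rematch M u v) u := by
      rcases lt_or_ge (util G (fun u v => f u v (B u) (B v)) α M u)
        (util G (fun u v => f u v (B u) (B v)) α (rematch M u v) u) with h | h
      · exact h
      · have h2 : util G (fun u v => f u v (B u) (B v)) α (rematch M u v) u -
            util G (fun u v => f u v (B u) (B v)) α M u ≤ 0 := by linarith
        nlinarith [mul_le_mul_of_nonneg_left h2 ht0]
    have hblockv : util G (fun u v => f u v (B u) (B v)) α M v <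
        util G (fun u v => f u v (B u) (B v)) α (rematch M u v) v := by
      rcases lt_or_ge (util G (fun u v => f u v (B u) (B v)) α M v)
        (util G (fun u v => f u v (B u) (B v)) α (rematch M u v) v) with h | h
      · exact h
      · have h2 : util G (fun u v => f u v (B u) (B v)) α (rematch M u v) v -
            util G (fun u v => f u v (B u) (B v)) α M v ≤ 0 := by linarith
        nlinarith [mul_le_mul_of_nonneg_left h2 ht0]
    exact hstab u v ⟨hAdjuv, hMuv, hblocku, hblockv⟩
end
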